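/- arXiv:1911.03506 — 2 statements merged into one kernel-verified Lean document; each statement's English description precedes it below -/
import Mathlib

section
/- Let 0 ≤ β < α ≤ 1, let ω_α ∈ M_α and ω_β ∈ M_β with ω_β(t) > 0 for t > 0. Then there exists a constant K > 0, depending only on ω_α and ω_β, such that for every natural number n ≥ 1, Σ_{k=n}^{∞} ω_α(2^{−k})/ω_β(2^{−k}) ≤ K·ω_α(2^{−n})/ω_β(2^{−n}) (in particular the series converges). -/
/-!
Write `r k = ω_α(2^{-k}) / ω_β(2^{-k})`. Monotonicity of `ω_α` and subadditivity of `ω_β` give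
`r (k + 1) ≤ 2 r k`. Picking `β < α' < α`, condition (i) for `ω_β` at `α'` and condition (ii) for
`ω_α` at the resulting step `μ` give `r (k + μ) ≤ ρ^μ r k` for large `k`, with `ρ = 2^{α' - α} < 1`.
Together these bound `r (n + j)` by a multiple of `ρ^j r n` uniformly in `n`, and the tail sum is
dominated by a geometric series.
-/

/-- A modulus of continuity: continuous, nondecreasing, subadditive on `[0,∞)`,
vanishing at `0`. -/
def IsModulus (ω : ℝ → ℝ) : Prop :=
  ContinuousOn ω (Set.Ici 0) ∧ ω 0 = 0 ∧
  (∀ s t : ℝ, 0 ≤ s → s ≤ t → ω s ≤ ω t) ∧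
  (∀ s t : ℝ, 0 ≤ s → 0 ≤ t → ω (s + t) ≤ ω s + ω t)

/-- Leindler's class `M_α` of moduli of continuity. -/
def MemMClass (α : ℝ) (ω : ℝ → ℝ) : Prop :=
  IsModulus ω ∧
  (∀ α' : ℝ, α < α' → ∃ μ : ℕ, 1 ≤ μ ∧ ∀ n : ℕ, 1 ≤ n →
    2 * ω (1 / 2 ^ n) < (2:ℝ) ^ ((μ:ℝ) * α') * ω (1 / 2 ^ (n + μ))) ∧
  (∀ ν : ℕ, 1 ≤ ν → ∃ N : ℕ, ∀ n : ℕ, N < n →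
    (2:ℝ) ^ ((ν:ℝ) * α) * ω (1 / 2 ^ (n + ν)) < 2 * ω (1 / 2 ^ n))

theorem le_pow_mul_of_step_le {r : ℕ → ℝ} {c : ℝ} (hc : 0 ≤ c)
    (hstep : ∀ k, r (k + 1) ≤ c * r k) (n j : ℕ) : r (n + j) ≤ c ^ j * r n := by
  induction j with
  | zero => simp
  | succ j ih =>
    calc r (n + (j + 1)) ≤ c * r (n + j) := hstep (n + j)
      _ ≤ c * (c ^ j * r n) := by gcongr
      _ = c ^ (j + 1) * r n := by ring

theorem le_mul_geom_of_step_le_of_block_le {r : ℕ → ℝ} {c ρ : ℝ} {μ N : ℕ}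
    (hr : ∀ k, 0 ≤ r k) (hρ : 0 < ρ) (hρc : ρ ≤ c) (hμ : 0 < μ)
    (hstep : ∀ k, r (k + 1) ≤ c * r k) (hblock : ∀ k, N ≤ k → r (k + μ) ≤ ρ ^ μ * r k)
    (n j : ℕ) : r (n + j) ≤ (c / ρ) ^ (N + μ) * ρ ^ j * r n := by
  induction j using Nat.strong_induction_on with
  | _ j ih =>
    have hrn := hr n
    by_cases hj : μ ≤ j ∧ N ≤ n + (j - μ)
    · obtain ⟨i, rfl⟩ : ∃ i, j = i + μ := ⟨j - μ, by omega⟩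
      calc r (n + (i + μ)) = r (n + i + μ) := by rw [add_assoc]
        _ ≤ ρ ^ μ * r (n + i) := hblock _ (by omega)
        _ ≤ ρ ^ μ * ((c / ρ) ^ (N + μ) * ρ ^ i * r n) := by gcongr; exact ih i (by omega)
        _ = (c / ρ) ^ (N + μ) * ρ ^ (i + μ) * r n := by ring
    -- Otherwise `j < N + μ`, so the crude bound `c ^ j` is absorbed into the constant.
    · have hcρ : 1 ≤ c / ρ := (one_le_div hρ).2 hρc
      calc r (n + j) ≤ c ^ j * r n := le_pow_mul_of_step_le (hρ.le.trans hρc) hstep n j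
        _ = (c / ρ) ^ j * ρ ^ j * r n := by
          rw [div_pow, div_mul_cancel₀ _ (pow_ne_zero _ hρ.ne')]
        _ ≤ (c / ρ) ^ (N + μ) * ρ ^ j * r n := by
          gcongr
          omega

theorem summable_and_tsum_le_of_le_geom {r : ℕ → ℝ} {C ρ : ℝ} (hr : ∀ k, 0 ≤ r k)
    (hρ0 : 0 ≤ ρ) (hρ1 : ρ < 1) (n : ℕ) (h : ∀ j, r (n + j) ≤ C * ρ ^ j * r n) :
    Summable (fun j => r (n + j)) ∧ ∑' j, r (n + j) ≤ C / (1 - ρ) * r n := by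
  have hgeom : Summable fun j => C * r n * ρ ^ j :=
    (summable_geometric_of_lt_one hρ0 hρ1).mul_left _
  have hle : ∀ j, r (n + j) ≤ C * r n * ρ ^ j := fun j => (h j).trans_eq (by ring)
  have hsum : Summable fun j => r (n + j) := hgeom.of_nonneg_of_le (fun j => hr _) hle
  refine ⟨hsum, ?_⟩
  calc ∑' j, r (n + j) ≤ ∑' j, C * r n * ρ ^ j := hsum.tsum_le_tsum hle hgeom
    _ = C / (1 - ρ) * r n := by
      rw [tsum_mul_left, tsum_geometric_of_lt_one hρ0 hρ1]
      ring

theorem div_le_div_mul_div_of_mul_le {a a' b b' P Q : ℝ} (ha' : 0 ≤ a') (hb : 0 < b)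
    (hb' : 0 < b') (hP : 0 < P) (hA : P * a' ≤ a) (hB : b ≤ Q * b') :
    a' / b' ≤ Q / P * (a / b) := by
  have ha : 0 ≤ a := (mul_nonneg hP.le ha').trans hA
  rw [div_mul_div_comm, div_le_div_iff₀ hb' (mul_pos hP hb)]
  calc a' * (P * b) = P * a' * b := by ring
    _ ≤ a * (Q * b') := mul_le_mul hA hB hb.le ha
    _ = Q * a * b' := by ring

namespace IsModulus

variable {ω : ℝ → ℝ}

theorem nonneg (hω : IsModulus ω) {t : ℝ} (ht : 0 ≤ t) : 0 ≤ ω t :=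
  hω.2.1 ▸ hω.2.2.1 0 t le_rfl ht

theorem apply_two_mul_le (hω : IsModulus ω) {t : ℝ} (ht : 0 ≤ t) : ω (2 * t) ≤ 2 * ω t := by
  simpa only [two_mul] using hω.2.2.2 t t ht ht

end IsModulus

noncomputable def dyadicRatio (ωα ωβ : ℝ → ℝ) (k : ℕ) : ℝ :=
  ωα (1 / 2 ^ k) / ωβ (1 / 2 ^ k)

section dyadicRatio

variable {ωα ωβ : ℝ → ℝ}

theorem dyadicRatio_nonneg (hωα : IsModulus ωα) (hωβpos : ∀ t : ℝ, 0 < t → 0 < ωβ t)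
    (k : ℕ) : 0 ≤ dyadicRatio ωα ωβ k :=
  div_nonneg (hωα.nonneg (by positivity)) (hωβpos _ (by positivity)).le

theorem dyadicRatio_succ_le (hωα : IsModulus ωα) (hωβ : IsModulus ωβ)
    (hωβpos : ∀ t : ℝ, 0 < t → 0 < ωβ t) (k : ℕ) :
    dyadicRatio ωα ωβ (k + 1) ≤ 2 * dyadicRatio ωα ωβ k := by
  have hhalf : (2 : ℝ) * (1 / 2 ^ (k + 1)) = 1 / 2 ^ k := by
    rw [pow_succ]; field_simp
  have hA : ωα (1 / 2 ^ (k + 1)) ≤ ωα (1 / 2 ^ k) :=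
    hωα.2.2.1 _ _ (by positivity) (by gcongr <;> norm_num)
  have hB : ωβ (1 / 2 ^ k) ≤ 2 * ωβ (1 / 2 ^ (k + 1)) :=
    hhalf ▸ hωβ.apply_two_mul_le (by positivity)
  have hpos := hωβpos (1 / 2 ^ k) (by positivity)
  calc dyadicRatio ωα ωβ (k + 1) ≤ ωα (1 / 2 ^ k) / (ωβ (1 / 2 ^ k) / 2) := by
        unfold dyadicRatio
        gcongr
        · exact hωα.nonneg (by positivity)
        · linarith
    _ = 2 * dyadicRatio ωα ωβ k := by unfold dyadicRatio; field_simp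

theorem dyadicRatio_add_le {α α' : ℝ} {μ n : ℕ} (hωα : IsModulus ωα)
    (hωβpos : ∀ t : ℝ, 0 < t → 0 < ωβ t)
    (hA : (2 : ℝ) ^ ((μ : ℝ) * α) * ωα (1 / 2 ^ (n + μ)) < 2 * ωα (1 / 2 ^ n))
    (hB : 2 * ωβ (1 / 2 ^ n) < (2 : ℝ) ^ ((μ : ℝ) * α') * ωβ (1 / 2 ^ (n + μ))) :
    dyadicRatio ωα ωβ (n + μ) ≤ (2 ^ α' / 2 ^ α) ^ μ * dyadicRatio ωα ωβ n := by
  have key := div_le_div_mul_div_of_mul_le (hωα.nonneg (by positivity))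
    (mul_pos two_pos (hωβpos _ (by positivity))) (hωβpos _ (by positivity))
    (by positivity) hA.le hB.le
  rwa [mul_div_mul_left _ _ two_ne_zero, mul_comm (μ : ℝ) α, mul_comm (μ : ℝ) α',
    Real.rpow_mul_natCast zero_le_two, Real.rpow_mul_natCast zero_le_two, ← div_pow] at key

end dyadicRatio

theorem leindler_sum_bound_tail_general
    (α β : ℝ) (hβα : β < α)
    (ωα ωβ : ℝ → ℝ) (hωα : MemMClass α ωα) (hωβ : MemMClass β ωβ)
    (hωβpos : ∀ t : ℝ, 0 < t → 0 < ωβ t) :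
    ∃ K : ℝ, 0 < K ∧ ∀ n : ℕ, 1 ≤ n →
      (Summable fun j : ℕ => ωα (1 / 2 ^ (n + j)) / ωβ (1 / 2 ^ (n + j))) ∧
      ∑' j : ℕ, ωα (1 / 2 ^ (n + j)) / ωβ (1 / 2 ^ (n + j)) ≤
        K * (ωα (1 / 2 ^ n) / ωβ (1 / 2 ^ n)) := by
  obtain ⟨α', hβα', hα'α⟩ := exists_between hβα
  obtain ⟨μ, hμ, hωβ_grow⟩ := hωβ.2.1 α' hβα'
  obtain ⟨N, hωα_decay⟩ := hωα.2.2 μ hμ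
  set ρ : ℝ := 2 ^ α' / 2 ^ α
  have hρ0 : 0 < ρ := by positivity
  have hρ1 : ρ < 1 :=
    (div_lt_one (by positivity)).2 (Real.rpow_lt_rpow_of_exponent_lt one_lt_two hα'α)
  have hr := dyadicRatio_nonneg hωα.1 hωβpos
  have hgeom := le_mul_geom_of_step_le_of_block_le (c := 2) (N := N + 1) hr hρ0 (by linarith) hμ
    (dyadicRatio_succ_le hωα.1 hωβ.1 hωβpos)
    (fun k hk => dyadicRatio_add_le hωα.1 hωβpos (hωα_decay k hk) (hωβ_grow k (by omega)))
  have h1ρ : 0 < 1 - ρ := sub_pos.2 hρ1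
  exact ⟨(2 / ρ) ^ (N + 1 + μ) / (1 - ρ), by positivity,
    fun n _ => summable_and_tsum_le_of_le_geom hr hρ0.le hρ1 n (hgeom n)⟩

/-- Lemma 1, (4.2). For `0 ≤ β < α ≤ 1`, `ω_α ∈ M_α`,
`ω_β ∈ M_β` with `ω_β` positive on positives, the series
`Σ_{k=n}^∞ ω_α(2^{-k})/ω_β(2^{-k})` converges and is bounded by
`K ω_α(2^{-n})/ω_β(2^{-n})`. -/
theorem leindler_sum_bound_tail
    (α β : ℝ) (hβ : 0 ≤ β) (hβα : β < α) (hα : α ≤ 1)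
    (ωα ωβ : ℝ → ℝ) (hωα : MemMClass α ωα) (hωβ : MemMClass β ωβ)
    (hωβpos : ∀ t : ℝ, 0 < t → 0 < ωβ t) :
    ∃ K : ℝ, 0 < K ∧ ∀ n : ℕ, 1 ≤ n →
      (Summable fun j : ℕ => ωα (1 / 2 ^ (n + j)) / ωβ (1 / 2 ^ (n + j))) ∧
      ∑' j : ℕ, ωα (1 / 2 ^ (n + j)) / ωβ (1 / 2 ^ (n + j)) ≤
        K * (ωα (1 / 2 ^ n) / ωβ (1 / 2 ^ n)) :=
  leindler_sum_bound_tail_general α β hβα ωα ωβ hωα hωβ hωβpos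
end

section
/- Let a ∈ ℂ with |a| < 1, let θ : ℝ → ℝ be a continuous strictly increasing function with e^{iθ(t)} = τ_a(e^{it}) for all t ∈ ℝ, and let f ∈ C(𝕋). Then for every δ > 0, ((1 − |a|)/2)·ω(f, δ) ≤ ω(f ∘ θ^{−1}, δ). -/
/-- The Möbius transform `τ_a(z) = (z - a)/(1 - conj a · z)`. -/
noncomputable def tauA (a z : ℂ) : ℂ := (z - a) / (1 - (starRingEnd ℂ) a * z)

/-- The modulus of continuity `ω(g, δ) = sup { |g x - g y| : |x - y| ≤ δ }`. -/
noncomputable def modContR (g : ℝ → ℂ) (δ : ℝ) : ℝ :=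
  sSup {q : ℝ | ∃ x y : ℝ, |x - y| ≤ δ ∧ q = ‖g x - g y‖}

/-!
The Möbius map τ_a is ((1 + |a|)/(1 - |a|))-Lipschitz on the closed unit disc, since
τ_a z - τ_a w = (1 - |a|²)(z - w)/((1 - ā z)(1 - ā w)). Taking chords on the circle this reads
|sin((θ x - θ y)/2)| ≤ L |sin((x - y)/2)| with L = (1 + |a|)/(1 - |a|). As θ is continuous,
θ y - θ x → 0 when y ↓ x, and u cos u ≤ sin u on [0, π/2) turns the chord bound into the
bound L for the upper right Dini derivative of θ; hence θ is L-Lipschitz. Writing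
f = g ∘ θ with g = f ∘ θ⁻¹, subadditivity of the modulus of continuity gives
ω(f, δ) ≤ ω(g, L δ) ≤ ⌈L⌉ ω(g, δ) ≤ (L + 1) ω(g, δ) = 2/(1 - |a|) · ω(g, δ).
-/

theorem one_sub_norm_le_norm_one_sub_conj_mul {a z : ℂ} (hz : ‖z‖ ≤ 1) :
    1 - ‖a‖ ≤ ‖1 - starRingEnd ℂ a * z‖ :=
  calc 1 - ‖a‖ ≤ 1 - ‖starRingEnd ℂ a * z‖ := by
        rw [norm_mul, Complex.norm_conj]; gcongr; exact mul_le_of_le_one_right (norm_nonneg a) hz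
    _ ≤ ‖1 - starRingEnd ℂ a * z‖ := by simpa using norm_sub_norm_le (1 : ℂ) (starRingEnd ℂ a * z)

theorem tauA_sub_tauA {a z w : ℂ} (hz : 1 - starRingEnd ℂ a * z ≠ 0)
    (hw : 1 - starRingEnd ℂ a * w ≠ 0) :
    tauA a z - tauA a w = ((1 - ‖a‖ ^ 2 : ℝ) : ℂ) * (z - w) /
      ((1 - starRingEnd ℂ a * z) * (1 - starRingEnd ℂ a * w)) := by
  rw [tauA, tauA, div_sub_div _ _ hz hw]
  push_cast
  rw [← Complex.conj_mul']
  ring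

theorem norm_tauA_sub_tauA_le {a z w : ℂ} (ha : ‖a‖ < 1) (hz : ‖z‖ ≤ 1) (hw : ‖w‖ ≤ 1) :
    ‖tauA a z - tauA a w‖ ≤ (1 + ‖a‖) / (1 - ‖a‖) * ‖z - w‖ := by
  have h1a : 0 < 1 - ‖a‖ := by linarith
  have hdz := one_sub_norm_le_norm_one_sub_conj_mul (a := a) hz
  have hdw := one_sub_norm_le_norm_one_sub_conj_mul (a := a) hw
  rw [tauA_sub_tauA (norm_pos_iff.1 (h1a.trans_le hdz)) (norm_pos_iff.1 (h1a.trans_le hdw)),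
    norm_div, norm_mul, norm_mul, Complex.norm_real,
    Real.norm_of_nonneg (by nlinarith [norm_nonneg a]),
    div_le_iff₀ (mul_pos (h1a.trans_le hdz) (h1a.trans_le hdw))]
  calc (1 - ‖a‖ ^ 2) * ‖z - w‖ = (1 + ‖a‖) / (1 - ‖a‖) * ‖z - w‖ * ((1 - ‖a‖) * (1 - ‖a‖)) := by
        field_simp; ring
    _ ≤ _ := by gcongr

open Complex in
theorem norm_exp_mul_I_sub_exp_mul_I (s t : ℝ) :
    ‖exp (s * I) - exp (t * I)‖ = 2 * |Real.sin ((s - t) / 2)| := by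
  have h : exp (s * I) - exp (t * I) = exp (t * I) * (exp (I * (s - t : ℝ)) - 1) := by
    rw [mul_sub, ← exp_add]; push_cast; ring_nf
  rw [h, norm_mul, norm_exp_ofReal_mul_I, one_mul, norm_exp_I_mul_ofReal_sub_one, norm_mul,
    Real.norm_eq_abs, Real.norm_eq_abs, abs_two]

open Filter Topology

theorem sub_le_mul_sub_of_eventually_slope_lt {f : ℝ → ℝ} {L : ℝ} (hf : Continuous f)
    (h : ∀ p r, L < r → ∀ᶠ z in 𝓝[>] p, slope f p z < r) {x y : ℝ} (hxy : x ≤ y) :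
    f y - f x ≤ L * (y - x) := by
  have hB : ∀ z, HasDerivAt (fun z => f x + L * (z - x)) L z := fun z => by
    simpa using (((hasDerivAt_id z).sub_const x).const_mul L).const_add (f x)
  have := image_le_of_liminf_slope_right_le_deriv_boundary hf.continuousOn (by simp)
    (fun z _ => (hB z).continuousAt.continuousWithinAt) (fun z _ => (hB z).hasDerivWithinAt)
    (fun p _ r hr => (h p r hr).frequently) ⟨hxy, le_rfl⟩
  linarith

section Phase

variable {a : ℂ} {θ : ℝ → ℝ}

theorem abs_sin_half_phase_sub_le (ha : ‖a‖ < 1)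
    (hθ : ∀ t : ℝ, Complex.exp (θ t * Complex.I) = tauA a (Complex.exp (t * Complex.I)))
    (x y : ℝ) :
    |Real.sin ((θ x - θ y) / 2)| ≤ (1 + ‖a‖) / (1 - ‖a‖) * |Real.sin ((x - y) / 2)| := by
  have h := norm_tauA_sub_tauA_le ha (Complex.norm_exp_ofReal_mul_I x).le
    (Complex.norm_exp_ofReal_mul_I y).le
  rw [← hθ, ← hθ, norm_exp_mul_I_sub_exp_mul_I, norm_exp_mul_I_sub_exp_mul_I] at h
  linarith

theorem phase_sub_mul_cos_le (ha : ‖a‖ < 1)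
    (hθ : ∀ t : ℝ, Complex.exp (θ t * Complex.I) = tauA a (Complex.exp (t * Complex.I)))
    (hθmono : Monotone θ) {x y : ℝ} (hxy : x ≤ y)
    (hπ : θ y - θ x < Real.pi) :
    (θ y - θ x) * Real.cos ((θ y - θ x) / 2) ≤ (1 + ‖a‖) / (1 - ‖a‖) * (y - x) := by
  set u := (θ y - θ x) / 2
  have hu0 : 0 ≤ u := by have := hθmono hxy; simp only [u]; linarith
  have huπ : u < Real.pi / 2 := by simp only [u]; linarith
  have hcos : 0 < Real.cos u := Real.cos_pos_of_mem_Ioo ⟨by linarith [Real.pi_pos], huπ⟩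
  have hu_le_sin : u * Real.cos u ≤ Real.sin u := by
    have := Real.le_tan hu0 huπ
    rwa [Real.tan_eq_sin_div_cos, le_div_iff₀ hcos] at this
  have hsin : Real.sin u ≤ (1 + ‖a‖) / (1 - ‖a‖) * ((y - x) / 2) :=
    calc Real.sin u ≤ |Real.sin u| := le_abs_self _
      _ ≤ (1 + ‖a‖) / (1 - ‖a‖) * |Real.sin ((y - x) / 2)| := abs_sin_half_phase_sub_le ha hθ y x
      _ ≤ (1 + ‖a‖) / (1 - ‖a‖) * ((y - x) / 2) := by
        gcongr
        exact Real.abs_sin_le_abs.trans_eq (abs_of_nonneg (by linarith))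
  have : θ y - θ x = 2 * u := by simp only [u]; ring
  rw [this]
  linarith

theorem eventually_slope_phase_lt (ha : ‖a‖ < 1)
    (hθ : ∀ t : ℝ, Complex.exp (θ t * Complex.I) = tauA a (Complex.exp (t * Complex.I)))
    (hθcont : Continuous θ) (hθmono : StrictMono θ) (p : ℝ)
    {r : ℝ} (hr : (1 + ‖a‖) / (1 - ‖a‖) < r) : ∀ᶠ z in 𝓝[>] p, slope θ p z < r := by
  have hlim : Tendsto (fun z => θ z - θ p) (𝓝[>] p) (𝓝 0) :=
    tendsto_sub_nhds_zero_iff.2 ((hθcont.tendsto p).mono_left nhdsWithin_le_nhds)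
  have hcos : Tendsto (fun z => r * Real.cos ((θ z - θ p) / 2)) (𝓝[>] p) (𝓝 r) := by
    have := (Real.continuous_cos.tendsto 0).comp (zero_div (2 : ℝ) ▸ hlim.div_const 2)
    simpa using this.const_mul r
  have hL : 0 < (1 + ‖a‖) / (1 - ‖a‖) := div_pos (by positivity) (by linarith)
  filter_upwards [self_mem_nhdsWithin, hlim.eventually (gt_mem_nhds Real.pi_pos),
    hcos.eventually (lt_mem_nhds hr)] with z (hz : p < z) hπ hrcos
  have hmul := phase_sub_mul_cos_le ha hθ hθmono.monotone hz.le hπ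
  have hcos_pos : 0 < Real.cos ((θ z - θ p) / 2) := by
    by_contra! h
    nlinarith
  rw [slope_def_field, div_lt_iff₀ (sub_pos.2 hz)]
  refine lt_of_mul_lt_mul_right ?_ hcos_pos.le
  nlinarith

theorem abs_phase_sub_le (ha : ‖a‖ < 1)
    (hθ : ∀ t : ℝ, Complex.exp (θ t * Complex.I) = tauA a (Complex.exp (t * Complex.I)))
    (hθcont : Continuous θ) (hθmono : StrictMono θ) (x y : ℝ) :
    |θ x - θ y| ≤ (1 + ‖a‖) / (1 - ‖a‖) * |x - y| := by
  have key : ∀ x y, x ≤ y → θ y - θ x ≤ (1 + ‖a‖) / (1 - ‖a‖) * (y - x) := fun x y hxy =>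
    sub_le_mul_sub_of_eventually_slope_lt hθcont
      (fun p _ hr => eventually_slope_phase_lt ha hθ hθcont hθmono p hr) hxy
  rcases le_total x y with hxy | hyx
  · rw [abs_sub_comm, abs_of_nonneg (sub_nonneg.2 (hθmono.monotone hxy)), abs_sub_comm,
      abs_of_nonneg (sub_nonneg.2 hxy)]
    exact key x y hxy
  · rw [abs_of_nonneg (sub_nonneg.2 (hθmono.monotone hyx)), abs_of_nonneg (sub_nonneg.2 hyx)]
    exact key y x hyx

end Phase

section ModulusOfContinuity

variable {g : ℝ → ℂ} {δ : ℝ}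

theorem modContR_nonneg (g : ℝ → ℂ) (δ : ℝ) : 0 ≤ modContR g δ :=
  Real.sSup_nonneg <| by rintro _ ⟨x, y, -, rfl⟩; exact norm_nonneg _

theorem modContR_le {C : ℝ} (hδ : 0 ≤ δ) (h : ∀ x y, |x - y| ≤ δ → ‖g x - g y‖ ≤ C) :
    modContR g δ ≤ C :=
  csSup_le ⟨_, 0, 0, by simpa using hδ, rfl⟩ <| by rintro _ ⟨x, y, hxy, rfl⟩; exact h x y hxy

theorem norm_sub_le_modContR (hg : Bornology.IsBounded (Set.range g)) {x y : ℝ}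
    (hxy : |x - y| ≤ δ) : ‖g x - g y‖ ≤ modContR g δ := by
  obtain ⟨C, hC⟩ := Metric.isBounded_range_iff.1 hg
  refine le_csSup ⟨C, ?_⟩ ⟨x, y, hxy, rfl⟩
  rintro _ ⟨x, y, -, rfl⟩
  simpa [dist_eq_norm] using hC x y

theorem norm_sub_le_nat_mul_modContR (hg : Bornology.IsBounded (Set.range g)) (n : ℕ) {x y : ℝ}
    (hxy : |x - y| ≤ n * δ) : ‖g x - g y‖ ≤ n * modContR g δ := by
  induction n generalizing x with
  | zero =>
    obtain rfl : x = y := by simpa [sub_eq_zero] using hxy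
    simp
  | succ n ih =>
    have hn : (0 : ℝ) < n + 1 := by positivity
    set z := x + (y - x) / (n + 1)
    have hxz : |x - z| ≤ δ := by
      rw [show x - z = (x - y) / (n + 1) by simp only [z]; ring, abs_div, abs_of_pos hn,
        div_le_iff₀ hn]
      push_cast at hxy
      linarith
    have hzy : |z - y| ≤ n * δ := by
      rw [show z - y = (x - y) * n / (n + 1) by simp only [z]; field_simp; ring, abs_div,
        abs_mul, abs_of_pos hn, Nat.abs_cast, div_le_iff₀ hn]
      push_cast at hxy
      nlinarith [n.cast_nonneg (α := ℝ)]
    calc ‖g x - g y‖ ≤ ‖g x - g z‖ + ‖g z - g y‖ := norm_sub_le_norm_sub_add_norm_sub _ _ _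
      _ ≤ modContR g δ + n * modContR g δ := add_le_add (norm_sub_le_modContR hg hxz) (ih hzy)
      _ = (n + 1 : ℕ) * modContR g δ := by push_cast; ring

theorem modContR_comp_le (hg : Bornology.IsBounded (Set.range g)) {φ : ℝ → ℝ} {L : ℝ}
    (hφ : ∀ x y, |φ x - φ y| ≤ L * |x - y|) (hL : 0 ≤ L) (hδ : 0 ≤ δ) :
    modContR (g ∘ φ) δ ≤ ⌈L⌉₊ * modContR g δ :=
  modContR_le hδ fun x y hxy => norm_sub_le_nat_mul_modContR hg _ <|
    calc |φ x - φ y| ≤ L * δ := (hφ x y).trans (mul_le_mul_of_nonneg_left hxy hL)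
      _ ≤ ⌈L⌉₊ * δ := mul_le_mul_of_nonneg_right (Nat.le_ceil L) hδ

end ModulusOfContinuity

theorem modulus_of_continuity_comp_inv_phase_lower_general
    (a : ℂ) (ha : ‖a‖ < 1)
    (θ : ℝ → ℝ) (hθcont : Continuous θ) (hθmono : StrictMono θ)
    (hθ : ∀ t : ℝ, Complex.exp (θ t * Complex.I) =
      tauA a (Complex.exp (t * Complex.I)))
    (f : ℝ → ℂ) (hf : Continuous f) (hper : ∀ x : ℝ, f (x + 2 * Real.pi) = f x) :
    ∀ δ : ℝ, 0 < δ →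
      (1 - ‖a‖) / 2 * modContR f δ ≤
        modContR (f ∘ Function.invFun θ) δ := by
  intro δ hδ
  have h1a : 0 < 1 - ‖a‖ := by linarith
  have hL : 0 ≤ (1 + ‖a‖) / (1 - ‖a‖) := by positivity
  have hf_eq : f = (f ∘ Function.invFun θ) ∘ θ := by
    ext x; simp [Function.leftInverse_invFun hθmono.injective x]
  have hbdd : Bornology.IsBounded (Set.range (f ∘ Function.invFun θ)) :=
    (Function.Periodic.isBounded_of_continuous hper (by positivity) hf).subset
      (Set.range_comp_subset_range _ _)
  have hcomp := modContR_comp_le hbdd (abs_phase_sub_le ha hθ hθcont hθmono) hL hδ.le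
  rw [← hf_eq] at hcomp
  calc (1 - ‖a‖) / 2 * modContR f δ
      ≤ (1 - ‖a‖) / 2 * (((1 + ‖a‖) / (1 - ‖a‖) + 1) * modContR (f ∘ Function.invFun θ) δ) := by
        gcongr
        exact hcomp.trans (by gcongr; exacts [modContR_nonneg _ _, (Nat.ceil_lt_add_one hL).le])
    _ = modContR (f ∘ Function.invFun θ) δ := by field_simp; ring

/-- Lemma 4, lower estimate. If `θ` is a continuous strictly
increasing branch of the nonlinear phase and `f ∈ C(𝕋)`, then
`((1 - |a|)/2) ω(f, δ) ≤ ω(f ∘ θ⁻¹, δ)`. -/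
theorem modulus_of_continuity_comp_inv_phase_lower
    (a : ℂ) (ha : ‖a‖ < 1)
    (θ : ℝ → ℝ) (hθcont : Continuous θ) (hθmono : StrictMono θ)
    (hθ : ∀ t : ℝ, Complex.exp (θ t * Complex.I) =
      tauA a (Complex.exp (t * Complex.I)))
    (hθbij : Function.Bijective θ)
    (f : ℝ → ℂ) (hf : Continuous f) (hper : ∀ x : ℝ, f (x + 2 * Real.pi) = f x) :
    ∀ δ : ℝ, 0 < δ →
      (1 - ‖a‖) / 2 * modContR f δ ≤
        modContR (f ∘ Function.invFun θ) δ :=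
  modulus_of_continuity_comp_inv_phase_lower_general a ha θ hθcont hθmono hθ f hf hper
end
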